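/- Let $V : \mathbb{R}^N \to \mathbb{R}$ satisfy $\sigma := \inf_{|x| \ge \rho} V(x) > 0$ for some $\rho \ge 0$. Let $w$ be a bounded classical ($C^2$) solution of $-\Delta w + V w = f$ in $\mathbb{R}^N$ such that $|w(x)| \le C e^{-\eta |x|}$ and $|f(x)| \le C e^{-\delta |x|}$ for all $x$, where $C > 0$, $0 < \eta < \sqrt{\sigma}$, and $\eta < \delta \le \sqrt{\sigma}$. Then for any $\mu \in (\eta, \delta)$ there exists $M = M(\mu, \delta, \rho, \sigma, C) > 0$ such that $|w(x)| \le M e^{-\mu |x|}$ for all $x \in \mathbb{R}^N$. -/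

import Mathlib

open Real MeasureTheory RealInnerProductSpace

lemma sdt {g : ℝ → ℝ} {c : ℝ}
    (hg : ∀ᶠ s in nhds (0:ℝ), DifferentiableAt ℝ g s)
    (hc : HasDerivAt (deriv g) c 0) (hmax : IsLocalMax g 0) : c ≤ 0 := by
  by_contra h
  push_neg at h
  have h0 : deriv g 0 = 0 := hmax.deriv_eq_zero
  -- eventually slope of deriv g close to c
  have hs := hasDerivAt_iff_tendsto_slope.1 hc
  have hev : ∀ᶠ s in nhdsWithin 0 {(0:ℝ)}ᶜ, 0 < slope (deriv g) 0 s := by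
    filter_upwards [hs (Ioi_mem_nhds h)] with s hs; exact hs
  rw [nhdsWithin, Filter.eventually_inf_principal] at hev
  obtain ⟨ε, hε, hball⟩ := Metric.eventually_nhds_iff.1 (hev.and (hg.and hmax))
  -- on (0, ε), deriv g > 0
  have hpos : ∀ s ∈ Set.Ioo (0:ℝ) ε, 0 < deriv g s := by
    intro s hsm
    have hne : |s - 0| < ε := by rw [sub_zero, abs_of_pos hsm.1]; exact hsm.2
    have := (hball hne).1 (by simpa using ne_of_gt hsm.1)
    have hsl : slope (deriv g) 0 s = deriv g s / s := by
      simp [slope, h0, div_eq_inv_mul]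
    rw [hsl] at this
    exact (div_pos_iff.1 this).elim (fun h => h.1) (fun h => absurd hsm.1 (not_lt.2 h.2.le))
  have hcont : ContinuousOn g (Set.Icc 0 (ε/2)) := by
    intro s hsm
    have : |s - 0| < ε := by
      rw [sub_zero, abs_of_nonneg hsm.1]; linarith [hsm.2]
    exact ((hball this).2.1).continuousAt.continuousWithinAt
  have hmono := strictMonoOn_of_deriv_pos (convex_Icc (0:ℝ) (ε/2)) hcont ?_
  · have := hmono (Set.left_mem_Icc.2 (by linarith)) (Set.right_mem_Icc.2 (by linarith)) (by linarith)
    have hle : g (ε/2) ≤ g 0 := by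
      have : |(ε/2) - 0| < ε := by rw [sub_zero, abs_of_pos (by linarith)]; linarith
      exact (hball this).2.2
    linarith
  · intro s hsm
    rw [interior_Icc] at hsm
    exact hpos s ⟨hsm.1, by linarith [hsm.2]⟩

lemma coord_bound {N : ℕ} {u : EuclideanSpace ℝ (Fin N) → ℝ} (hu : ContDiff ℝ 2 u)
    {t μ : ℝ} (hμ : 0 < μ) {x₀ : EuclideanSpace ℝ (Fin N)} (hr : 0 < ‖x₀‖)
    (hmax : IsLocalMax (fun y => u y - t * Real.exp (-μ * ‖y‖)) x₀) (i : Fin N) :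
    fderiv ℝ (fderiv ℝ u) x₀ (EuclideanSpace.single i 1) (EuclideanSpace.single i 1)
      ≤ t * Real.exp (-μ * ‖x₀‖) *
        (μ^2 * (x₀ i)^2 / ‖x₀‖^2 - μ * (‖x₀‖^2 - (x₀ i)^2) / ‖x₀‖^3) := by
  set r := ‖x₀‖ with hrdef
  set b := x₀ i with hbdef
  set v := EuclideanSpace.single i (1:ℝ) with hvdef
  set L : ℝ → EuclideanSpace ℝ (Fin N) := fun s => x₀ + s • v with hLdef
  set p : ℝ → ℝ := fun s => r^2 + 2*b*s + s^2 with hpdef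
  have hv1 : ‖v‖ = 1 := by simp [hvdef]
  have hbv : ⟪x₀, v⟫ = b := by
    simp [hvdef, EuclideanSpace.inner_single_right, hbdef]
  have hL0 : L 0 = x₀ := by simp [hLdef]
  have hnormsq : ∀ s, ‖L s‖^2 = p s := by
    intro s
    have h1 : ‖x₀ + s • v‖^2 = ‖x₀‖^2 + 2*⟪x₀, s • v⟫ + ‖s • v‖^2 := norm_add_sq_real _ _
    have h2 : ⟪x₀, s • v⟫ = s * b := by rw [real_inner_smul_right, hbv]
    have h3 : ‖s • v‖^2 = s^2 := by
      rw [norm_smul, hv1, mul_one, Real.norm_eq_abs, sq_abs]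
    simp only [hLdef, hpdef]
    rw [h1, h2, h3]; ring
  have hLpos : ∀ s, |s| < r → 0 < ‖L s‖ := by
    intro s hs
    have h1 : ‖x₀‖ ≤ ‖L s‖ + ‖s • v‖ := by
      calc ‖x₀‖ = ‖(x₀ + s • v) - s • v‖ := by rw [add_sub_cancel_right]
        _ ≤ ‖x₀ + s • v‖ + ‖s • v‖ := norm_sub_le _ _
    have h2 : ‖s • v‖ = |s| := by rw [norm_smul, hv1, mul_one, Real.norm_eq_abs]
    rw [h2] at h1
    linarith
  have hppos : ∀ s, |s| < r → 0 < p s := by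
    intro s hs
    rw [← hnormsq s]; exact pow_pos (hLpos s hs) 2
  have hps : ∀ s, |s| < r → ‖L s‖ = Real.sqrt (p s) := by
    intro s hs
    rw [← hnormsq s, Real.sqrt_sq (norm_nonneg _)]
  have h0r : |(0:ℝ)| < r := by simpa using hr
  have hq0 : Real.sqrt (p 0) = r := by
    have : p 0 = r^2 := by simp [hpdef]
    rw [this, Real.sqrt_sq hr.le]
  -- derivatives of u along the line
  have hdiffu : Differentiable ℝ u := hu.differentiable (by norm_num)
  have hLd : ∀ s : ℝ, HasDerivAt L v s := by
    intro s
    have h1 : HasDerivAt (fun s : ℝ => s • v) ((1:ℝ) • v) s := (hasDerivAt_id s).smul_const v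
    simpa [hLdef] using h1.const_add x₀
  have hg1 : ∀ s : ℝ, HasDerivAt (fun s => u (L s)) (fderiv ℝ u (L s) v) s :=
    fun s => (hdiffu (L s)).hasFDerivAt.comp_hasDerivAt s (hLd s)
  have hfC1 : ContDiff ℝ 1 (fderiv ℝ u) := hu.fderiv_right (by norm_num)
  have hg2 : HasDerivAt (fun s => fderiv ℝ u (L s) v)
      (fderiv ℝ (fderiv ℝ u) x₀ v v) 0 := by
    have hD : HasFDerivAt (fderiv ℝ u) (fderiv ℝ (fderiv ℝ u) (L 0)) (L 0) :=
      ((hfC1.differentiable (by norm_num)) (L 0)).hasFDerivAt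
    have hA : HasFDerivAt (fun y => fderiv ℝ u y v)
        ((ContinuousLinearMap.apply ℝ ℝ v).comp (fderiv ℝ (fderiv ℝ u) (L 0))) (L 0) :=
      (ContinuousLinearMap.apply ℝ ℝ v).hasFDerivAt.comp (L 0) hD
    have h2 := hA.comp_hasDerivAt 0 (hLd 0)
    simp only [hL0, ContinuousLinearMap.comp_apply, ContinuousLinearMap.apply_apply] at h2
    exact h2
  -- derivative of sqrt (p s)
  have hq : ∀ s, |s| < r → HasDerivAt (fun s => Real.sqrt (p s)) ((b+s)/Real.sqrt (p s)) s := by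
    intro s hs
    have hp : HasDerivAt p (2*b + 2*s) s := by
      have h1 : HasDerivAt (fun s:ℝ => r^2 + 2*b*s) (2*b) s := by
        simpa using ((hasDerivAt_id s).const_mul (2*b)).const_add (r^2)
      have h2 : HasDerivAt (fun s:ℝ => s^2) (2*s) s := by
        simpa using hasDerivAt_pow 2 s
      simp only [hpdef]; exact h1.add h2
    have hsq := (Real.hasDerivAt_sqrt (ne_of_gt (hppos s hs))).comp s hp
    have hsqpos : 0 < Real.sqrt (p s) := Real.sqrt_pos.2 (hppos s hs)
    refine hsq.congr_deriv ?_
    field_simp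
  -- derivative of the comparison function along the line
  set φ₁ : ℝ → ℝ := fun s =>
    t * (Real.exp (-μ * Real.sqrt (p s)) * (-μ * ((b+s)/Real.sqrt (p s)))) with hφ₁def
  have hφ : ∀ s, |s| < r → HasDerivAt (fun s => t * Real.exp (-μ * ‖L s‖)) (φ₁ s) s := by
    intro s hs
    have h1 : HasDerivAt (fun s => -μ * Real.sqrt (p s)) (-μ * ((b+s)/Real.sqrt (p s))) s :=
      (hq s hs).const_mul (-μ)
    have h2 := (h1.exp).const_mul t
    refine h2.congr_of_eventuallyEq ?_
    have hev : ∀ᶠ s' in nhds s, |s'| < r :=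
      (isOpen_lt continuous_abs continuous_const).eventually_mem hs
    filter_upwards [hev] with s' hs'
    rw [hps s' hs']
  -- second derivative of comparison at 0
  have hE : HasDerivAt (fun s => Real.exp (-μ * Real.sqrt (p s)))
      (Real.exp (-μ * Real.sqrt (p 0)) * (-μ * ((b+0)/Real.sqrt (p 0)))) 0 :=
    ((hq 0 h0r).const_mul (-μ)).exp
  have hQ : HasDerivAt (fun s => (b+s)/Real.sqrt (p s))
      ((1 * Real.sqrt (p 0) - (b+0) * ((b+0)/Real.sqrt (p 0))) / Real.sqrt (p 0)^2) 0 := by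
    have hnum : HasDerivAt (fun s:ℝ => b + s) 1 0 := by
      simpa using (hasDerivAt_id (0:ℝ)).const_add b
    exact hnum.div (hq 0 h0r) (by rw [hq0]; exact hr.ne')
  have hφ₁0 : HasDerivAt φ₁
      (t * Real.exp (-μ*r) * (μ^2 * b^2/r^2 - μ*(r^2-b^2)/r^3)) 0 := by
    have hprod := (hE.mul (hQ.const_mul (-μ))).const_mul t
    refine hprod.congr_deriv ?_
    rw [hq0]
    field_simp
    ring
  -- assemble g and apply the second derivative test
  set g : ℝ → ℝ := fun s => u (L s) - t * Real.exp (-μ * ‖L s‖) with hgdef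
  have hev0 : ∀ᶠ s in nhds (0:ℝ), |s| < r :=
    (isOpen_lt continuous_abs continuous_const).eventually_mem h0r
  have hgdiff : ∀ᶠ s in nhds (0:ℝ), DifferentiableAt ℝ g s := by
    filter_upwards [hev0] with s hs
    exact ((hg1 s).sub (hφ s hs)).differentiableAt
  have hgder : HasDerivAt (deriv g)
      (fderiv ℝ (fderiv ℝ u) x₀ v v
        - t * Real.exp (-μ*r) * (μ^2 * b^2/r^2 - μ*(r^2-b^2)/r^3)) 0 := by
    have Hf := hg2.sub hφ₁0
    refine Hf.congr_of_eventuallyEq ?_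
    filter_upwards [hev0] with s hs
    exact ((hg1 s).sub (hφ s hs)).deriv
  have hgmax : IsLocalMax g 0 := by
    have hcl : Continuous L := by
      simp only [hLdef]
      exact continuous_const.add (continuous_id.smul continuous_const)
    have hten : Filter.Tendsto L (nhds 0) (nhds x₀) := by
      have := hcl.continuousAt (x := (0:ℝ))
      rwa [ContinuousAt, hL0] at this
    have hev := hten.eventually hmax
    filter_upwards [hev] with s hs
    simpa [hgdef, hL0] using hs
  have := sdt hgdiff hgder hgmax
  linarith

lemma lap_bound {N : ℕ} {u : EuclideanSpace ℝ (Fin N) → ℝ} (hu : ContDiff ℝ 2 u)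
    {t μ : ℝ} (ht : 0 ≤ t) (hμ : 0 < μ) {x₀ : EuclideanSpace ℝ (Fin N)} (hr : 0 < ‖x₀‖)
    (hmax : IsLocalMax (fun y => u y - t * Real.exp (-μ * ‖y‖)) x₀) :
    ∑ i, iteratedFDeriv ℝ 2 u x₀ ![EuclideanSpace.single i 1, EuclideanSpace.single i 1]
      ≤ μ^2 * t * Real.exp (-μ * ‖x₀‖) := by
  have hsum : ∑ i, (x₀ i)^2 = ‖x₀‖^2 := by
    rw [EuclideanSpace.norm_eq, Real.sq_sqrt (by positivity)]
    simp [sq_abs]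
  have hb2 : ∀ i, (x₀ i)^2 ≤ ‖x₀‖^2 := fun i =>
    hsum ▸ Finset.single_le_sum (fun j _ => sq_nonneg (x₀ j)) (Finset.mem_univ i)
  have key : ∀ i : Fin N,
      iteratedFDeriv ℝ 2 u x₀ ![EuclideanSpace.single i 1, EuclideanSpace.single i 1]
        ≤ μ^2 * t * Real.exp (-μ * ‖x₀‖) * (x₀ i)^2 / ‖x₀‖^2 := by
    intro i
    rw [iteratedFDeriv_two_apply]
    have h1 := coord_bound hu hμ hr hmax i
    have h2 : 0 ≤ μ * (‖x₀‖^2 - (x₀ i)^2) / ‖x₀‖^3 :=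
      div_nonneg (mul_nonneg hμ.le (by linarith [hb2 i])) (by positivity)
    have h3 : 0 ≤ t * Real.exp (-μ * ‖x₀‖) := mul_nonneg ht (Real.exp_pos _).le
    simp only [Matrix.cons_val_zero, Matrix.cons_val_one, Matrix.head_cons]
    have h4 : t * Real.exp (-μ * ‖x₀‖) *
        (μ^2 * (x₀ i)^2 / ‖x₀‖^2 - μ * (‖x₀‖^2 - (x₀ i)^2) / ‖x₀‖^3)
        = μ^2 * t * Real.exp (-μ * ‖x₀‖) * (x₀ i)^2 / ‖x₀‖^2
          - t * Real.exp (-μ * ‖x₀‖) * (μ * (‖x₀‖^2 - (x₀ i)^2) / ‖x₀‖^3) := by ring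
    linarith [mul_nonneg h3 h2]
  calc ∑ i, iteratedFDeriv ℝ 2 u x₀ ![EuclideanSpace.single i 1, EuclideanSpace.single i 1]
      ≤ ∑ i, μ^2 * t * Real.exp (-μ * ‖x₀‖) * (x₀ i)^2 / ‖x₀‖^2 :=
        Finset.sum_le_sum fun i _ => key i
    _ = μ^2 * t * Real.exp (-μ * ‖x₀‖) := by
        rw [← Finset.sum_div]
        rw [← Finset.mul_sum, hsum]
        field_simp

/-- Comparison-principle bootstrap (Rabier–Stuart type): if a bounded classical solution of
`-Δw + V w = f`, with `V ≥ σ > 0` outside the ball of radius `ρ`, decays at rate `η < √σ`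
and the source `f` decays at a faster rate `δ ∈ (η, √σ]`, then for any `μ ∈ (η, δ)` one has
`|w(x)| ≤ M e^{-μ|x|}` for some `M > 0`. -/
theorem stmt5 (N : ℕ)
    (V w f : EuclideanSpace ℝ (Fin N) → ℝ)
    (ρ σ C η δ μ : ℝ) (hρ : 0 ≤ ρ) (hσ : 0 < σ)
    (hV : ∀ x : EuclideanSpace ℝ (Fin N), ρ ≤ ‖x‖ → σ ≤ V x)
    (hw2 : ContDiff ℝ 2 w) (hwb : ∃ B : ℝ, ∀ x, |w x| ≤ B)
    (heq : ∀ x : EuclideanSpace ℝ (Fin N),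
      -(∑ i, iteratedFDeriv ℝ 2 w x ![EuclideanSpace.single i 1, EuclideanSpace.single i 1])
        + V x * w x = f x)
    (hC : 0 < C) (hη0 : 0 < η) (hησ : η < Real.sqrt σ)
    (hηδ : η < δ) (hδσ : δ ≤ Real.sqrt σ)
    (hwdec : ∀ x, |w x| ≤ C * Real.exp (-η * ‖x‖))
    (hfdec : ∀ x, |f x| ≤ C * Real.exp (-δ * ‖x‖))
    (hμ1 : η < μ) (hμ2 : μ < δ) :
    ∃ M : ℝ, 0 < M ∧ ∀ x : EuclideanSpace ℝ (Fin N), |w x| ≤ M * Real.exp (-μ * ‖x‖) := by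
  have hμ0 : 0 < μ := lt_trans hη0 hμ1
  have hμσ : μ^2 < σ := by
    have h1 : μ < Real.sqrt σ := lt_of_lt_of_le hμ2 hδσ
    nlinarith [Real.sq_sqrt hσ.le, Real.sqrt_nonneg σ]
  set R := max ρ 1 with hRdef
  have hR1 : (1:ℝ) ≤ R := le_max_right _ _
  have hR0 : (0:ℝ) < R := lt_of_lt_of_le one_pos hR1
  have hRρ : ρ ≤ R := le_max_left _ _
  set t := max (C * Real.exp ((μ - η)*R)) (C / (σ - μ^2)) with htdef
  have ht0 : 0 < t := lt_of_lt_of_le (by positivity) (le_max_left _ _)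
  have key : ∀ (u fu : EuclideanSpace ℝ (Fin N) → ℝ), ContDiff ℝ 2 u →
      (∀ x, |u x| ≤ C * Real.exp (-η * ‖x‖)) →
      (∀ x, |fu x| ≤ C * Real.exp (-δ * ‖x‖)) →
      (∀ x, -(∑ i, iteratedFDeriv ℝ 2 u x
          ![EuclideanSpace.single i 1, EuclideanSpace.single i 1]) + V x * u x = fu x) →
      ∀ x, R ≤ ‖x‖ → u x ≤ t * Real.exp (-μ * ‖x‖) := by
    intro u fu hu hudec hfudec hueq
    by_contra hcon
    push_neg at hcon
    obtain ⟨q, hqR, hq⟩ := hcon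
    set U : EuclideanSpace ℝ (Fin N) → ℝ := fun y => u y - t * Real.exp (-μ * ‖y‖) with hUdef
    have hUcont : Continuous U :=
      (hu.continuous).sub (continuous_const.mul ((continuous_const.mul continuous_norm).rexp))
    have hUq : 0 < U q := sub_pos.2 hq
    -- boundary values are nonpositive
    have hbd : ∀ z : EuclideanSpace ℝ (Fin N), ‖z‖ = R → U z ≤ 0 := by
      intro z hz
      have h1 : u z ≤ C * Real.exp (-η * R) := by
        have := le_trans (le_abs_self _) (hudec z)
        rwa [hz] at this
      have h2 : C * Real.exp (-η * R) ≤ t * Real.exp (-μ * R) := by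
        have h3 : C * Real.exp ((μ - η)*R) * Real.exp (-μ * R) = C * Real.exp (-η * R) := by
          rw [mul_assoc, ← Real.exp_add]; ring_nf
        have h4 : C * Real.exp ((μ - η)*R) ≤ t := le_max_left _ _
        calc C * Real.exp (-η * R) = C * Real.exp ((μ - η)*R) * Real.exp (-μ * R) := h3.symm
          _ ≤ t * Real.exp (-μ * R) :=
            mul_le_mul_of_nonneg_right h4 (Real.exp_pos _).le
      simp only [hUdef, hz]
      linarith
    -- the set where U is at least U q, beyond radius R, is compact
    set K := {x : EuclideanSpace ℝ (Fin N) | R ≤ ‖x‖ ∧ U q ≤ U x} with hKdef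
    have hKne : q ∈ K := ⟨hqR, le_refl _⟩
    have hKclosed : IsClosed K :=
      (isClosed_le continuous_const continuous_norm).inter (isClosed_le continuous_const hUcont)
    have hKbdd : ∀ x ∈ K, ‖x‖ ≤ η⁻¹ * (-Real.log (U q / C)) := by
      intro x hx
      have h1 : U q ≤ u x := by
        have h3 := hx.2
        have h2 : 0 ≤ t * Real.exp (-μ * ‖x‖) := by positivity
        simp only [hUdef] at h3 ⊢
        linarith
      have h2 : u x ≤ C * Real.exp (-η * ‖x‖) := le_trans (le_abs_self _) (hudec x)
      have h3 : U q / C ≤ Real.exp (-η * ‖x‖) := (div_le_iff₀ hC).2 (by nlinarith)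
      have h4 : Real.log (U q / C) ≤ -η * ‖x‖ :=
        (Real.log_le_iff_le_exp (by positivity)).2 h3
      have h5 : η * ‖x‖ ≤ -Real.log (U q / C) := by linarith
      calc ‖x‖ = η⁻¹ * (η * ‖x‖) := by field_simp
        _ ≤ η⁻¹ * (-Real.log (U q / C)) :=
          mul_le_mul_of_nonneg_left h5 (by positivity)
    have hKcompact : IsCompact K := by
      refine Metric.isCompact_of_isClosed_isBounded hKclosed ?_
      refine (Metric.isBounded_closedBall (x := (0:EuclideanSpace ℝ (Fin N)))
        (r := η⁻¹ * (-Real.log (U q / C)))).subset ?_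
      intro x hx
      rw [Metric.mem_closedBall, dist_zero_right]
      exact hKbdd x hx
    obtain ⟨x₀, hx₀K, hx₀max⟩ := hKcompact.exists_isMaxOn ⟨q, hKne⟩ hUcont.continuousOn
    have hUx₀ : 0 < U x₀ := lt_of_lt_of_le hUq (hx₀max hKne)
    have hglob : ∀ y, R ≤ ‖y‖ → U y ≤ U x₀ := by
      intro y hy
      by_cases hyK : y ∈ K
      · exact hx₀max hyK
      · have h1 : ¬ (U q ≤ U y) := fun h => hyK ⟨hy, h⟩
        push_neg at h1
        have h2 : U q ≤ U x₀ := hx₀max hKne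
        linarith
    have hx₀R : R < ‖x₀‖ := by
      rcases lt_or_eq_of_le hx₀K.1 with h | h
      · exact h
      · exact absurd hUx₀ (not_lt.2 (hbd x₀ h.symm))
    have hlmax : IsLocalMax U x₀ := by
      have hball : Metric.ball x₀ (‖x₀‖ - R) ∈ nhds x₀ := Metric.ball_mem_nhds _ (by linarith)
      filter_upwards [hball] with y hy
      apply hglob
      rw [Metric.mem_ball, dist_eq_norm] at hy
      have h1 : ‖x₀‖ - ‖y‖ ≤ ‖y - x₀‖ := by
        have := norm_sub_norm_le x₀ y
        rw [norm_sub_rev] at this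
        linarith [abs_le.1 (abs_norm_sub_norm_le x₀ y)]
      linarith
    have hlap := lap_bound hu ht0.le hμ0 (lt_trans hR0 hx₀R) hlmax
    -- derive contradiction
    have heq0 := hueq x₀
    have hV0 : σ ≤ V x₀ := hV x₀ (le_trans hRρ hx₀K.1)
    have hw0 : t * Real.exp (-μ * ‖x₀‖) < u x₀ := by
      have := hUx₀; simp only [hUdef] at this; linarith
    have hupos : 0 < u x₀ := lt_trans (by positivity) hw0
    have hVu : σ * u x₀ ≤ V x₀ * u x₀ := mul_le_mul_of_nonneg_right hV0 hupos.le
    have hσu : σ * (t * Real.exp (-μ * ‖x₀‖)) < σ * u x₀ :=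
      (mul_lt_mul_iff_right₀ hσ).2 hw0
    have hf0 : fu x₀ ≤ C * Real.exp (-δ * ‖x₀‖) := le_trans (le_abs_self _) (hfudec x₀)
    have hfE : C * Real.exp (-δ * ‖x₀‖) ≤ C * Real.exp (-μ * ‖x₀‖) := by
      apply mul_le_mul_of_nonneg_left _ hC.le
      apply Real.exp_le_exp.2
      have h1 : 0 < ‖x₀‖ := lt_trans hR0 hx₀R
      nlinarith
    -- fu x₀ > (σ - μ²) t E
    have hlow : (σ - μ^2) * t * Real.exp (-μ * ‖x₀‖) < fu x₀ := by linarith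
    have hE : (0:ℝ) < Real.exp (-μ * ‖x₀‖) := Real.exp_pos _
    have hup : (σ - μ^2) * t < C := by nlinarith [hlow, hf0, hfE, hE]
    have htge : C ≤ t * (σ - μ^2) :=
      (div_le_iff₀ (by linarith : (0:ℝ) < σ - μ^2)).1 (le_max_right _ _)
    linarith
  refine ⟨max t (C * Real.exp (μ * R)), lt_of_lt_of_le ht0 (le_max_left _ _), ?_⟩
  intro x
  have hE : (0:ℝ) < Real.exp (-μ * ‖x‖) := Real.exp_pos _
  by_cases hx : R ≤ ‖x‖
  · have h1 := key w f hw2 hwdec hfdec heq x hx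
    have h2 := key (-w) (-f) hw2.neg
      (by intro y; rw [Pi.neg_apply, abs_neg]; exact hwdec y)
      (by intro y; rw [Pi.neg_apply, abs_neg]; exact hfdec y)
      (by
        intro y
        have h := heq y
        simp only [Pi.neg_apply, iteratedFDeriv_neg_apply,
          ContinuousMultilinearMap.neg_apply, Finset.sum_neg_distrib]
        linarith) x hx
    rw [Pi.neg_apply] at h2
    have h3 : t * Real.exp (-μ * ‖x‖) ≤ max t (C * Real.exp (μ * R)) * Real.exp (-μ * ‖x‖) :=
      mul_le_mul_of_nonneg_right (le_max_left _ _) hE.le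
    rw [abs_le]
    constructor <;> linarith
  · push_neg at hx
    have h1 : |w x| ≤ C := by
      have h2 : Real.exp (-η * ‖x‖) ≤ 1 := by
        rw [Real.exp_le_one_iff]
        have h4 := mul_nonneg hη0.le (norm_nonneg x)
        linarith
      calc |w x| ≤ C * Real.exp (-η * ‖x‖) := hwdec x
        _ ≤ C * 1 := mul_le_mul_of_nonneg_left h2 hC.le
        _ = C := mul_one C
    have h2 : C ≤ C * Real.exp (μ * R) * Real.exp (-μ * ‖x‖) := by
      rw [mul_assoc, ← Real.exp_add]
      have h3 : (0:ℝ) ≤ μ * R + -μ * ‖x‖ := by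
        have h4 := mul_nonneg hμ0.le (sub_nonneg.2 hx.le)
        linarith [mul_nonneg hμ0.le (sub_nonneg.2 hx.le)]
      calc C = C * 1 := (mul_one C).symm
        _ ≤ C * Real.exp (μ * R + -μ * ‖x‖) :=
          mul_le_mul_of_nonneg_left (Real.one_le_exp h3) hC.le
    calc |w x| ≤ C := h1
      _ ≤ C * Real.exp (μ * R) * Real.exp (-μ * ‖x‖) := h2
      _ ≤ max t (C * Real.exp (μ * R)) * Real.exp (-μ * ‖x‖) :=
        mul_le_mul_of_nonneg_right (le_max_right _ _) hE.le
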